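/- Let C₀ ⊆ ℝᵐ be an open convex set and F : ℝᵐ → ℝᵐ continuously differentiable and pseudomonotone on C₀ with symmetric Jacobian DF(x) for every x ∈ C₀. Let P ∈ ℝ^{m×m} be an orthogonal projection matrix (Pᵀ = P, P² = P). Suppose e₂ > 0 is such that for every x ∈ C₀ the smallest eigenvalue of the symmetric matrix DF(x) + e₂·P has multiplicity at least two (i.e., listing the eigenvalues with multiplicity, the minimum value is attained by at least two indices). Then for every s ≥ e₂ the map x ↦ F(x) + s · P x is monotone on C₀: ⟪(F(x) + s·Px) − (F(y) + s·Py), x − y⟫ ≥ 0 for all x, y ∈ C₀. -/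

import Mathlib

/-!
Pseudomonotonicity of `F` forces `⟪DF(x) u, u⟫ ≥ 0` for every `u` orthogonal to `F x`. The least
eigenspace of `DF(x) + e₂ P` has dimension at least two, so it meets the hyperplane `(F x)ᗮ` in a
nonzero vector `z`; as `P` is positive semidefinite, `⟪(DF(x) + e₂ P) z, z⟫ ≥ 0`, so the least
eigenvalue is nonnegative and `DF(x) + e₂ P ⪰ 0`. For `s ≥ e₂` the Jacobian `DF + s P` of `F + s P`
is then positive semidefinite on the convex set `C₀`, which makes `F + s P` monotone there.
-/

open Filter Topology Matrix

variable {ι : Type*} [Fintype ι]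

def PseudomonotoneOn (C : Set (ι → ℝ)) (F : (ι → ℝ) → ι → ℝ) : Prop :=
  ∀ x ∈ C, ∀ y ∈ C, 0 ≤ F x ⬝ᵥ (y - x) → 0 ≤ F y ⬝ᵥ (y - x)

theorem HasFDerivAt.hasDerivAt_dotProduct_lineMap {G : (ι → ℝ) → ι → ℝ}
    {G' : (ι → ℝ) →L[ℝ] ι → ℝ} {x u : ι → ℝ} {t : ℝ} (hG : HasFDerivAt G G' (x + t • u))
    (w : ι → ℝ) : HasDerivAt (fun t : ℝ => G (x + t • u) ⬝ᵥ w) (G' u ⬝ᵥ w) t := by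
  have hline : HasDerivAt (fun t : ℝ => x + t • u) u t := by
    simpa using ((hasDerivAt_id t).smul_const u).const_add x
  have hcomp := hG.comp_hasDerivAt t hline
  exact HasDerivAt.fun_sum fun i _ => (hasDerivAt_pi.1 hcomp i).mul_const (w i)

theorem PseudomonotoneOn.fderiv_dotProduct_nonneg {C : Set (ι → ℝ)} {F : (ι → ℝ) → ι → ℝ}
    (hF : PseudomonotoneOn C F) (hC : IsOpen C) {x : ι → ℝ} (hx : x ∈ C)
    (hdiff : DifferentiableAt ℝ F x) {u : ι → ℝ} (hu : F x ⬝ᵥ u = 0) :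
    0 ≤ fderiv ℝ F x u ⬝ᵥ u := by
  set g : ℝ → ℝ := fun t => F (x + t • u) ⬝ᵥ u
  have hg : HasDerivAt g (fderiv ℝ F x u ⬝ᵥ u) 0 :=
    HasFDerivAt.hasDerivAt_dotProduct_lineMap (by simpa using hdiff.hasFDerivAt) u
  have hg0 : g 0 = 0 := by simpa [g] using hu
  have hmem : ∀ᶠ t in 𝓝[>] (0 : ℝ), x + t • u ∈ C :=
    nhdsWithin_le_nhds <| (Continuous.tendsto (by fun_prop) 0).eventually
      (by simpa using hC.mem_nhds hx)
  -- pseudomonotonicity at `x` and `x + t • u`, where `F x ⬝ᵥ (t • u) = 0`, gives `t * g t ≥ 0`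
  have hslope : ∀ᶠ t in 𝓝[>] (0 : ℝ), 0 ≤ slope g 0 t := by
    filter_upwards [hmem, self_mem_nhdsWithin] with t ht (htpos : 0 < t)
    have h := hF x hx _ ht (by simp [dotProduct_smul, hu])
    simp only [add_sub_cancel_left, dotProduct_smul, smul_eq_mul] at h
    rw [slope_def_field, hg0, sub_zero, sub_zero]
    exact div_nonneg (nonneg_of_mul_nonneg_right h htpos) htpos.le
  exact ge_of_tendsto (hasDerivAt_iff_tendsto_slope_left_right.1 hg).2 hslope

theorem dotProduct_sub_nonneg_of_hasFDerivAt {C : Set (ι → ℝ)} (hC : Convex ℝ C)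
    {G : (ι → ℝ) → ι → ℝ} {G' : (ι → ℝ) → (ι → ℝ) →L[ℝ] ι → ℝ}
    (hG : ∀ x ∈ C, HasFDerivAt G (G' x) x) (hG' : ∀ x ∈ C, ∀ u, 0 ≤ G' x u ⬝ᵥ u)
    {x y : ι → ℝ} (hx : x ∈ C) (hy : y ∈ C) : 0 ≤ (G x - G y) ⬝ᵥ (x - y) := by
  set φ : ℝ → ℝ := fun t => G (y + t • (x - y)) ⬝ᵥ (x - y)
  have hφ : ∀ t ∈ Set.Icc (0 : ℝ) 1, HasDerivAt φ (G' (y + t • (x - y)) (x - y) ⬝ᵥ (x - y)) t :=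
    fun t ht => (hG _ (hC.add_smul_sub_mem hy hx ht)).hasDerivAt_dotProduct_lineMap _
  have hmono : MonotoneOn φ (Set.Icc 0 1) := by
    refine monotoneOn_of_hasDerivWithinAt_nonneg (convex_Icc 0 1)
      (fun t ht => (hφ t ht).continuousAt.continuousWithinAt)
      (fun t ht => (hφ t (interior_subset ht)).hasDerivWithinAt) fun t ht => ?_
    exact hG' _ (hC.add_smul_sub_mem hy hx (interior_subset ht)) _
  have h01 : φ 0 ≤ φ 1 := hmono (by simp) (by simp) zero_le_one
  simp only [φ, zero_smul, add_zero, one_smul, add_sub_cancel] at h01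
  rw [sub_dotProduct]
  linarith

theorem exists_smul_add_smul_ne_zero_apply_eq_zero {K M : Type*} [Field K] [AddCommGroup M]
    [Module K M] {v w : M} (h : LinearIndependent K ![v, w]) (ℓ : M →ₗ[K] K) :
    ∃ a b : K, a • v + b • w ≠ 0 ∧ ℓ (a • v + b • w) = 0 := by
  by_cases hv : ℓ v = 0
  · exact ⟨1, 0, fun h0 => one_ne_zero (LinearIndependent.pair_iff.1 h 1 0 h0).1, by simp [hv]⟩
  · refine ⟨ℓ w, -ℓ v, fun h0 => hv (neg_eq_zero.1 (LinearIndependent.pair_iff.1 h _ _ h0).2), ?_⟩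
    simp only [map_add, map_smul, smul_eq_mul]
    ring

namespace Matrix

theorem IsSymm.posSemidef_of_isIdempotentElem {P : Matrix ι ι ℝ} (hP : P.IsSymm)
    (hP' : IsIdempotentElem P) : P.PosSemidef := by
  have h : Pᴴ * P = P := by rw [conjTranspose_eq_transpose_of_trivial, hP, hP'.eq]
  simpa only [h] using posSemidef_conjTranspose_mul_self P

variable [DecidableEq ι]

theorem IsHermitian.linearIndependent_eigenvectorBasis_pair {A : Matrix ι ι ℝ}
    (hA : A.IsHermitian) {i j : ι} (hij : i ≠ j) :
    LinearIndependent ℝ ![⇑(hA.eigenvectorBasis i), ⇑(hA.eigenvectorBasis j)] := by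
  have h : ![⇑(hA.eigenvectorBasis i), ⇑(hA.eigenvectorBasis j)] =
      (WithLp.linearEquiv 2 ℝ (ι → ℝ)) ∘ hA.eigenvectorBasis ∘ ![i, j] := by
    ext k : 1
    fin_cases k <;> rfl
  rw [h]
  exact (hA.eigenvectorBasis.orthonormal.linearIndependent.comp ![i, j]
    (injective_pair_iff_ne.2 hij)).map' _ (LinearEquiv.ker _)

theorem IsHermitian.posSemidef_of_nonneg_on_hyperplane {A : Matrix ι ι ℝ}
    (hA : A.IsHermitian) (hmult : ∃ i j : ι, i ≠ j ∧ (∀ k, hA.eigenvalues i ≤ hA.eigenvalues k) ∧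
      hA.eigenvalues j = hA.eigenvalues i)
    (f : ι → ℝ) (hf : ∀ z, f ⬝ᵥ z = 0 → 0 ≤ z ⬝ᵥ A *ᵥ z) : A.PosSemidef := by
  obtain ⟨i, j, hij, hmin, hji⟩ := hmult
  set v := ⇑(hA.eigenvectorBasis i)
  set w := ⇑(hA.eigenvectorBasis j)
  obtain ⟨a, b, hz, hfz⟩ := exists_smul_add_smul_ne_zero_apply_eq_zero
    (hA.linearIndependent_eigenvectorBasis_pair hij) (dotProductBilin ℝ ℝ f)
  rw [dotProductBilin_apply_apply] at hfz
  set z := a • v + b • w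
  have hAz : A *ᵥ z = hA.eigenvalues i • z := by
    simp only [z, mulVec_add, mulVec_smul, v, w, hA.mulVec_eigenvectorBasis, hji, smul_comm a,
      smul_comm b, smul_add]
  have hquad : 0 ≤ hA.eigenvalues i * (z ⬝ᵥ z) := by
    simpa only [hAz, dotProduct_smul, smul_eq_mul] using hf z hfz
  have hlam : 0 ≤ hA.eigenvalues i := nonneg_of_mul_nonneg_left hquad
    (by simpa only [star_trivial] using dotProduct_star_self_pos_iff.2 hz)
  exact hA.posSemidef_iff_eigenvalues_nonneg.2 fun k => hlam.trans (hmin k)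

end Matrix

theorem stmt_15_general {m : ℕ} (C₀ : Set (Fin m → ℝ)) (hopen : IsOpen C₀) (hconv : Convex ℝ C₀)
    (F : (Fin m → ℝ) → (Fin m → ℝ)) (hF : ContDiff ℝ 1 F)
    (hpseudo : ∀ x ∈ C₀, ∀ y ∈ C₀,
      0 ≤ ∑ i, F x i * (y i - x i) → 0 ≤ ∑ i, F y i * (y i - x i))
    (J : (Fin m → ℝ) → Matrix (Fin m) (Fin m) ℝ)
    (hJ : ∀ x ∈ C₀, ∀ u : Fin m → ℝ, (J x).mulVec u = fderiv ℝ F x u)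
    (P : Matrix (Fin m) (Fin m) ℝ) (hP1 : Pᵀ = P) (hP2 : P * P = P)
    (e₂ : ℝ) (he₂ : 0 < e₂)
    (hsym' : ∀ x ∈ C₀, (J x + e₂ • P).IsHermitian)
    (hmult : ∀ (x : Fin m → ℝ) (hx : x ∈ C₀), ∃ i j : Fin m, i ≠ j ∧
      (∀ k : Fin m, (hsym' x hx).eigenvalues i ≤ (hsym' x hx).eigenvalues k) ∧
      (hsym' x hx).eigenvalues j = (hsym' x hx).eigenvalues i) :
    ∀ s : ℝ, e₂ ≤ s → ∀ x ∈ C₀, ∀ y ∈ C₀,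
      0 ≤ ∑ i, ((F x i + s * P.mulVec x i) - (F y i + s * P.mulVec y i)) * (x i - y i) := by
  intro s hs x hx y hy
  have hP : P.PosSemidef := IsSymm.posSemidef_of_isIdempotentElem hP1 hP2
  have hH : ∀ z ∈ C₀, (J z + e₂ • P).PosSemidef := fun z hz =>
    (hsym' z hz).posSemidef_of_nonneg_on_hyperplane (hmult z hz) (F z) fun u hu => by
      have hJu : 0 ≤ u ⬝ᵥ J z *ᵥ u := by
        simpa only [hJ z hz, dotProduct_comm u] using PseudomonotoneOn.fderiv_dotProduct_nonneg
          hpseudo hopen hz (hF.differentiable one_ne_zero z) hu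
      have hPu : 0 ≤ u ⬝ᵥ P *ᵥ u := by simpa using hP.dotProduct_mulVec_nonneg u
      rw [add_mulVec, dotProduct_add, smul_mulVec, dotProduct_smul, smul_eq_mul]
      exact add_nonneg hJu (mul_nonneg he₂.le hPu)
  have hJs : ∀ z ∈ C₀, (J z + s • P).PosSemidef := fun z hz => by
    have h := (hH z hz).add (hP.smul (sub_nonneg.2 hs))
    rwa [add_assoc, ← add_smul, add_sub_cancel] at h
  set L : (Fin m → ℝ) →L[ℝ] Fin m → ℝ := LinearMap.toContinuousLinearMap (mulVecLin P)
  have hG : ∀ z ∈ C₀, HasFDerivAt (fun x => F x + s • P *ᵥ x) (fderiv ℝ F z + s • L) z :=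
    fun z _ => (hF.differentiable one_ne_zero z).hasFDerivAt.add (L.hasFDerivAt.const_smul s)
  refine dotProduct_sub_nonneg_of_hasFDerivAt hconv hG (fun z hz u => ?_) hx hy
  simpa [← hJ z hz, L, add_mulVec, smul_mulVec, dotProduct_comm u] using
    (hJs z hz).dotProduct_mulVec_nonneg u

theorem stmt_15 {m : ℕ} (C₀ : Set (Fin m → ℝ)) (hopen : IsOpen C₀) (hconv : Convex ℝ C₀)
    (F : (Fin m → ℝ) → (Fin m → ℝ)) (hF : ContDiff ℝ 1 F)
    (hpseudo : ∀ x ∈ C₀, ∀ y ∈ C₀,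
      0 ≤ ∑ i, F x i * (y i - x i) → 0 ≤ ∑ i, F y i * (y i - x i))
    (J : (Fin m → ℝ) → Matrix (Fin m) (Fin m) ℝ)
    (hJ : ∀ x ∈ C₀, ∀ u : Fin m → ℝ, (J x).mulVec u = fderiv ℝ F x u)
    (hsym : ∀ x ∈ C₀, (J x).IsHermitian)
    (P : Matrix (Fin m) (Fin m) ℝ) (hP1 : Pᵀ = P) (hP2 : P * P = P)
    (e₂ : ℝ) (he₂ : 0 < e₂)
    (hsym' : ∀ x ∈ C₀, (J x + e₂ • P).IsHermitian)
    (hmult : ∀ (x : Fin m → ℝ) (hx : x ∈ C₀), ∃ i j : Fin m, i ≠ j ∧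
      (∀ k : Fin m, (hsym' x hx).eigenvalues i ≤ (hsym' x hx).eigenvalues k) ∧
      (hsym' x hx).eigenvalues j = (hsym' x hx).eigenvalues i) :
    ∀ s : ℝ, e₂ ≤ s → ∀ x ∈ C₀, ∀ y ∈ C₀,
      0 ≤ ∑ i, ((F x i + s * P.mulVec x i) - (F y i + s * P.mulVec y i)) * (x i - y i) :=
  stmt_15_general C₀ hopen hconv F hF hpseudo J hJ P hP1 hP2 e₂ he₂ hsym' hmult
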